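/- Fix n ∈ ℕ, set ρ_n = στσ²τ⋯σⁿτ, let y = lim_{l→∞} σ^{n+2}τσ^{n+3}τ⋯σ^{n+l}τ(aaa⋯), and let x = ρ_n σ^{n+1}τ(y). If w is a return word to ca in σ^{n+1}τ(y), then, writing wca = ca w' ca, the word ρ_n(ca) occurs exactly twice in ρ_n(ca w' ca); consequently ρ_n(w) is a return word to ρ_n(ca) in x, and moreover |w| ≥ 3^{n+2}. -/

import Mathlib

namespace DurandLR

variable {A B : Type*}

/-- `u` occurs at position `i` in the one-sided sequence `x`. -/
def OccursAt (x : ℕ → A) (u : List A) (i : ℕ) : Prop :=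
  ∀ k : Fin u.length, x (i + (k : ℕ)) = u.get k

/-- `u` occurs (somewhere) in the one-sided sequence `x`. -/
def Occurs (x : ℕ → A) (u : List A) : Prop := ∃ i, OccursAt x u i

/-- `u` occurs at position `i` in the two-sided sequence `x`. -/
def OccursAtZ (x : ℤ → A) (u : List A) (i : ℤ) : Prop :=
  ∀ k : Fin u.length, x (i + (k : ℕ)) = u.get k

def OccursZ (x : ℤ → A) (u : List A) : Prop := ∃ i, OccursAtZ x u i

/-- The word `u` has exactly `m` occurrences in the finite word `w`. -/
def OccCountEq (u w : List A) (m : ℕ) : Prop :=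
  {i : ℕ | u <+: w.drop i}.ncard = m

/-- `w` is a return word to `u` in the one-sided sequence `x`: `wu` occurs in `x`,
`u` is a prefix of `wu` and `u` has exactly two occurrences in `wu`. -/
def IsReturnWord (x : ℕ → A) (u w : List A) : Prop :=
  Occurs x (w ++ u) ∧ u <+: (w ++ u) ∧ OccCountEq u (w ++ u) 2

/-- `w` is a return word to `u` in the two-sided sequence `x`. -/
def IsReturnWordZ (x : ℤ → A) (u w : List A) : Prop :=
  OccursZ x (w ++ u) ∧ u <+: (w ++ u) ∧ OccCountEq u (w ++ u) 2

/-- `x` is uniformly recurrent: every word occurring in `x` occurs with bounded gaps. -/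
def UniformlyRecurrent (x : ℕ → A) : Prop :=
  ∀ u, Occurs x u → ∃ M : ℕ, ∀ i : ℕ, ∃ j, i ≤ j ∧ j < i + M ∧ OccursAt x u j

def UniformlyRecurrentZ (x : ℤ → A) : Prop :=
  ∀ u, OccursZ x u → ∃ M : ℕ, ∀ i : ℤ, ∃ j : ℤ, i ≤ j ∧ j < i + M ∧ OccursAtZ x u j

/-- `x` is linearly recurrent with constant `K`. -/
def LinearlyRecurrentWith (x : ℕ → A) (K : ℕ) : Prop :=
  UniformlyRecurrent x ∧ ∀ u w, IsReturnWord x u w → w.length ≤ K * u.length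

def LinearlyRecurrent (x : ℕ → A) : Prop := ∃ K, LinearlyRecurrentWith x K

def LinearlyRecurrentZ (x : ℤ → A) : Prop :=
  UniformlyRecurrentZ x ∧ ∃ K : ℕ, ∀ u w, IsReturnWordZ x u w → w.length ≤ K * u.length

/-- The subshift generated by a two-sided sequence `x` : all `z` whose finite subwords
occur in `x`. -/
def SubshiftGenZ (x : ℤ → A) : Set (ℤ → A) := {z | ∀ u, OccursZ z u → OccursZ x u}

/-- The subshift generated by a one-sided sequence `x`. -/
def SubshiftGen (x : ℕ → A) : Set (ℤ → A) := {z | ∀ u, OccursZ z u → Occurs x u}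

/-- A minimal subshift: nonempty and every element generates it. -/
def IsMinimalSubshift (X : Set (ℤ → A)) : Prop :=
  X.Nonempty ∧ ∀ z ∈ X, X = SubshiftGenZ z

/-- A linearly recurrent subshift: minimal and containing an LR sequence. -/
def IsLRSubshift (X : Set (ℤ → A)) : Prop :=
  IsMinimalSubshift X ∧ ∃ x ∈ X, LinearlyRecurrentZ x

def IsPeriodic (z : ℤ → A) : Prop := ∃ p : ℕ, 0 < p ∧ ∀ n : ℤ, z (n + p) = z n

/-- Image of a finite word under a morphism (substitution). -/
def wordMap (σ : A → List B) : List A → List B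
  | [] => []
  | a :: u => σ a ++ wordMap σ u

/-- Composition of two morphisms: `compM σ τ = σ ∘ τ`. -/
def compM (σ τ : A → List A) : A → List A := fun b => wordMap σ (τ b)

/-- Iterate of a morphism: `powM σ n = σ^n`. -/
def powM (σ : A → List A) : ℕ → A → List A
  | 0 => fun b => [b]
  | n + 1 => compM σ (powM σ n)

/-- `chain σ r n = σ_r ∘ σ_{r+1} ∘ ⋯ ∘ σ_{r+n-1}` (the empty composition for `n = 0`). -/
def chain (σ : ℕ → A → List A) (r : ℕ) : ℕ → A → List A
  | 0 => fun b => [b]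
  | n + 1 => fun b => wordMap (chain σ r n) (σ (r + n) b)

/-- The periodic infinite sequence `www⋯` obtained by repeating the word `w`
(with a default letter for the degenerate empty case). -/
def repSeq (w : List A) (d : A) : ℕ → A := fun i => w.getD (i % w.length) d

/-- The prefix of length `n` of the sequence `x`, as a word. -/
def seqTake (x : ℕ → A) (n : ℕ) : List A := (List.range n).map x

/-- `y` is the image of the infinite sequence `z` under the morphism `σ`:
the image of every prefix of `z` is a prefix of `y`. -/
def IsSeqImage (σ : A → List B) (z : ℕ → A) (y : ℕ → B) : Prop :=
  ∀ n, seqTake y (wordMap σ (seqTake z n)).length = wordMap σ (seqTake z n)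

/-- `σ_0 σ_1 ⋯ σ_n (aaa⋯)` converges to `x` in the product topology, where the `n`-th
approximation is the periodic sequence obtained by repeating the word `W n`. -/
def ConvergesTo (W : ℕ → List A) (d : A) (x : ℕ → A) : Prop :=
  ∀ m, ∃ N, ∀ n ≥ N, repSeq (W n) d m = x m

/-- A proper morphism: all images begin with the same letter and end with the same letter. -/
def ProperMorphism (σ : A → List A) : Prop :=
  ∃ l r : A, ∀ b, (σ b).head? = some l ∧ (σ b).getLast? = some r

/-- Primitivity with constant `s₀` of a directive sequence of morphisms
`σ_n : A_{n+1} → A_n^*`: every `b ∈ A_r` occurs in `σ_{r+1} ⋯ σ_{r+s₀} (c)`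
for every `c ∈ A_{r+s₀+1}`. -/
def PrimitiveWith (σ : ℕ → A → List A) (Aseq : ℕ → Set A) (s0 : ℕ) : Prop :=
  ∀ r : ℕ, ∀ b ∈ Aseq r, ∀ c ∈ Aseq (r + s0 + 1), b ∈ chain σ (r + 1) s0 c

/-- The data of an S-adic system: `a` belongs to every alphabet and
`σ_n` maps `A_{n+1}` into words over `A_n`. -/
def SAdicSystem (σ : ℕ → A → List A) (Aseq : ℕ → Set A) (a : A) : Prop :=
  (∀ n, a ∈ Aseq n) ∧ (∀ n, ∀ b ∈ Aseq (n + 1), ∀ c ∈ σ n b, c ∈ Aseq n)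

/-- `x` is the S-adic sequence generated by the directive sequence `σ` and letter `a`:
`σ_0 σ_1 ⋯ σ_n (aaa⋯)` converges to `x`. -/
def GeneratesSAdic (σ : ℕ → A → List A) (Aseq : ℕ → Set A) (a : A) (x : ℕ → A) : Prop :=
  SAdicSystem σ Aseq a ∧ ConvergesTo (fun n => chain σ 0 (n + 1) a) a x

/-- The complexity function `p_x(n)`: the number of distinct words of length `n`
occurring in `x`. -/
noncomputable def complexity (x : ℕ → A) (n : ℕ) : ℕ := {u : List A | u.length = n ∧ Occurs x u}.ncard

/-- Any two successive occurrences of `u` in `x` differ by at most `M`. -/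
def GapsBoundedBy (x : ℕ → A) (u : List A) (M : ℕ) : Prop :=
  ∀ i j, OccursAt x u i → OccursAt x u j → i < j →
    (∀ k, i < k → k < j → ¬ OccursAt x u k) → j - i ≤ M

/-- The finite word `x_{[p,q)}` of a two-sided sequence. -/
def zSeg (x : ℤ → A) (p q : ℤ) : List A := (List.range (q - p).toNat).map fun t => x (p + t)

/-- `w` is a return word to `u.v` in the two-sided sequence `x`: there are two
consecutive occurrences `j < k` of `uv` in `x` with `w = x_{[j+|u|, k+|u|)}`. -/
def IsReturnWordUV (x : ℤ → A) (u v w : List A) : Prop :=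
  ∃ j k : ℤ, OccursAtZ x (u ++ v) j ∧ OccursAtZ x (u ++ v) k ∧ j < k ∧
    (∀ i : ℤ, j < i → i < k → ¬ OccursAtZ x (u ++ v) i) ∧
    w = zSeg x (j + u.length) (k + u.length)

/-- The substitution `σ` on `{a,b,c} = {0,1,2}`: `σ(a)=acb`, `σ(b)=bab`, `σ(c)=cbc`. -/
def sigma3 : Fin 3 → List (Fin 3) := ![[0, 2, 1], [1, 0, 1], [2, 1, 2]]

/-- The substitution `τ` on `{a,b,c} = {0,1,2}`: `τ(a)=abc`, `τ(b)=acb`, `τ(c)=aac`. -/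
def tau3 : Fin 3 → List (Fin 3) := ![[0, 1, 2], [0, 2, 1], [0, 0, 2]]

/-- `rho n = σ τ σ² τ ⋯ σⁿ τ` (identity for `n = 0`). -/
def rho : ℕ → Fin 3 → List (Fin 3)
  | 0 => fun b => [b]
  | n + 1 => compM (rho n) (compM (powM sigma3 (n + 1)) tau3)

/-- `psi n l = σ^{n+2} τ σ^{n+3} τ ⋯ σ^{n+l+1} τ` (identity for `l = 0`). -/
def psi (n : ℕ) : ℕ → Fin 3 → List (Fin 3)
  | 0 => fun b => [b]
  | l + 1 => compM (psi n l) (compM (powM sigma3 (n + 2 + l)) tau3)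

/-- The Sturmian substitution `τ` on `{0,1}`: `τ(0)=0`, `τ(1)=10`. -/
def tau2 : Fin 2 → List (Fin 2) := ![[0], [1, 0]]

/-- The Sturmian substitution `σ` on `{0,1}`: `σ(0)=01`, `σ(1)=1`. -/
def sigma2 : Fin 2 → List (Fin 2) := ![[0, 1], [1]]

/-- `xi i k = τ^{i₁} σ^{i₂} τ^{i₃} ⋯ τ^{i_{2k-1}} σ^{i_{2k}}` (identity for `k = 0`). -/
def xi (i : ℕ → ℕ) : ℕ → Fin 2 → List (Fin 2)
  | 0 => fun b => [b]
  | k + 1 => compM (xi i k) (compM (powM tau2 (i (2 * k + 1))) (powM sigma2 (i (2 * k + 2))))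

/-- `a : ℕ → ℕ` gives (from index 1 on) the continued fraction expansion
`α = [0; a₁, a₂, a₃, …]`, expressed through the Gauss map. -/
def IsCFExpansion (α : ℝ) (a : ℕ → ℕ) : Prop :=
  ∃ β : ℕ → ℝ, β 0 = α ∧ ∀ n : ℕ,
    0 < β n ∧ β n < 1 ∧ (a (n + 1) : ℤ) = ⌊1 / β n⌋ ∧ β (n + 1) = 1 / β n - ⌊1 / β n⌋

/-! ### Auxiliary machinery for `return_word_image` -/

section Aux

theorem wordMap_append (φ : A → List B) :
    ∀ u v : List A, wordMap φ (u ++ v) = wordMap φ u ++ wordMap φ v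
  | [], v => rfl
  | a :: u, v => by simp [wordMap, wordMap_append φ u v]

theorem IsPrefixWordMap {φ : A → List B} {u v : List A} (h : u <+: v) :
    wordMap φ u <+: wordMap φ v := by
  obtain ⟨t, rfl⟩ := h
  exact ⟨wordMap φ t, (wordMap_append φ u t).symm⟩

theorem wordMap_comp (φ ψ : A → List A) :
    ∀ v, wordMap (compM φ ψ) v = wordMap φ (wordMap ψ v)
  | [] => rfl
  | a :: v => by
    simp [wordMap, compM, wordMap_append, wordMap_comp φ ψ v]

theorem wordMap_id : ∀ v : List A, wordMap (fun b => [b]) v = v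
  | [] => rfl
  | a :: v => by simp [wordMap, wordMap_id v]

/-- `φ` is `L`-uniform. -/
def Uniform (φ : A → List B) (L : ℕ) : Prop := ∀ b, (φ b).length = L

theorem length_wordMap {φ : A → List B} {L : ℕ} (h : Uniform φ L) :
    ∀ v : List A, (wordMap φ v).length = L * v.length
  | [] => by simp [wordMap]
  | a :: v => by
    simp [wordMap, h a, length_wordMap h v, Nat.mul_succ]; omega

theorem wordMap_drop {φ : A → List B} {L : ℕ} (h : Uniform φ L) :
    ∀ (i : ℕ) (v : List A), wordMap φ (v.drop i) = (wordMap φ v).drop (L * i)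
  | 0, v => by simp
  | i + 1, [] => by simp [wordMap]
  | i + 1, a :: v => by
    have ha : (φ a).length = L := h a
    have h1 : (φ a).length ≤ L * (i + 1) := by rw [ha, Nat.mul_succ]; omega
    have h2 : L * (i + 1) - (φ a).length = L * i := by rw [ha, Nat.mul_succ]; omega
    show wordMap φ (v.drop i) = (φ a ++ wordMap φ v).drop (L * (i + 1))
    rw [List.drop_append, List.drop_eq_nil_of_le h1, List.nil_append, h2,
      wordMap_drop h i v]

theorem drop_prefix_mono {u v : List A} (h : u <+: v) (p : ℕ) :
    u.drop p <+: v.drop p := h.drop p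

/-- Restriction of an occurrence to a prefix of the big word. -/
theorem prefix_restrict {u w w' : List A} {p : ℕ} (h : u <+: w.drop p)
    (hw : w' <+: w) (hlen : p + u.length ≤ w'.length) : u <+: w'.drop p :=
  List.prefix_of_prefix_length_le h (hw.drop p) (by rw [List.length_drop]; omega)

/-- A `Sync`hronized (recognizable) uniform morphism of width `L`. -/
def Sync (φ : Fin 3 → List (Fin 3)) (L : ℕ) : Prop :=
  0 < L ∧ Uniform φ L ∧
    ∀ U V : List (Fin 3), ∀ p : ℕ, 2 ≤ U.length →
      (wordMap φ U <+: (wordMap φ V).drop p ↔ ∃ i, p = L * i ∧ U <+: V.drop i)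

section Atomic

variable {φ : Fin 3 → List (Fin 3)}

theorem decode3 (hU3 : Uniform φ 3) (hinj : ∀ x y : Fin 3, φ x = φ y → x = y) :
    ∀ (U V : List (Fin 3)), wordMap φ U <+: wordMap φ V → U <+: V
  | [], _, _ => List.nil_prefix
  | x :: U, [], h => by
    have := h.length_le
    simp [wordMap, hU3 x] at this
  | x :: U, y :: V, h => by
    have hxy : φ x = φ y := by
      have h1 : φ x <+: wordMap φ (y :: V) :=
        (List.prefix_append (φ x) (wordMap φ U)).trans h
      have h2 : φ x <+: φ y := by
        refine List.prefix_of_prefix_length_le h1 ?_ (by rw [hU3 x, hU3 y])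
        exact List.prefix_append (φ y) (wordMap φ V)
      exact h2.eq_of_length (by rw [hU3 x, hU3 y])
    have htail : wordMap φ U <+: wordMap φ V := by
      have h3 := h.drop 3
      have e1 : (wordMap φ (x :: U)).drop 3 = wordMap φ U := by
        have t := @List.drop_left _ (φ x) (wordMap φ U)
        rw [hU3 x] at t
        exact t
      have e2 : (wordMap φ (y :: V)).drop 3 = wordMap φ V := by
        have t := @List.drop_left _ (φ y) (wordMap φ V)
        rw [hU3 y] at t
        exact t
      rwa [e1, e2] at h3
    rw [List.cons_prefix_cons]
    exact ⟨hinj x y hxy, decode3 hU3 hinj U V htail⟩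

theorem align3 (hU3 : Uniform φ 3) (hinj : ∀ x y : Fin 3, φ x = φ y → x = y)
    (hF : ∀ x y z x' y' : Fin 3,
      ¬ (wordMap φ [x, y] <+: (wordMap φ [z, x', y']).drop 1) ∧
      ¬ (wordMap φ [x, y] <+: (wordMap φ [z, x', y']).drop 2)) :
    ∀ (V U : List (Fin 3)) (p : ℕ), 2 ≤ U.length →
      wordMap φ U <+: (wordMap φ V).drop p → ∃ i, p = 3 * i ∧ U <+: V.drop i := by
  intro V
  induction V with
  | nil =>
    intro U p hU h
    have h1 := h.length_le
    rw [show (wordMap φ ([] : List (Fin 3))).drop p = []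
        from List.drop_nil, List.length_nil, length_wordMap hU3] at h1
    omega
  | cons b V ih =>
    intro U p hU h
    by_cases hp3 : 3 ≤ p
    · have hred : (wordMap φ (b :: V)).drop p = (wordMap φ V).drop (p - 3) := by
        rw [show wordMap φ (b :: V) = φ b ++ wordMap φ V from rfl,
          List.drop_append, List.drop_eq_nil_of_le (by rw [hU3 b]; omega),
          List.nil_append, hU3 b]
      rw [hred] at h
      obtain ⟨i, hi, hpre⟩ := ih U (p - 3) hU h
      exact ⟨i + 1, by omega, by simpa using hpre⟩
    · -- p < 3
      rcases U with _ | ⟨x, U1⟩; · simp at hU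
      rcases U1 with _ | ⟨y, U2⟩; · simp at hU
      -- the first two blocks occur at p
      have h2 : wordMap φ [x, y] <+: (wordMap φ (b :: V)).drop p := by
        refine List.IsPrefix.trans ?_ h
        refine ⟨wordMap φ U2, ?_⟩
        show (φ x ++ (φ y ++ [])) ++ wordMap φ U2 = φ x ++ (φ y ++ wordMap φ U2)
        simp
      -- pad V to length ≥ 3
      have hpad : wordMap φ [x, y] <+: (wordMap φ ((b :: V) ++ [0, 0, 0])).drop p := by
        refine List.IsPrefix.trans h2 ?_
        exact (IsPrefixWordMap (List.prefix_append _ _)).drop p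
      set V3 : List (Fin 3) := (b :: V) ++ [0, 0, 0] with hV3
      have hV3len : 3 ≤ V3.length := by simp [hV3]
      have hrestr : wordMap φ [x, y] <+: (wordMap φ (V3.take 3)).drop p := by
        refine prefix_restrict hpad (IsPrefixWordMap (List.take_prefix 3 V3)) ?_
        rw [length_wordMap hU3, length_wordMap hU3, List.length_take,
          show ([x, y] : List (Fin 3)).length = 2 from rfl]
        omega
      obtain ⟨z, x', y', hT⟩ := List.length_eq_three.mp
        (by rw [List.length_take]; omega : (V3.take 3).length = 3)
      rw [hT] at hrestr
      interval_cases p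
      · -- p = 0 : decode
        exact ⟨0, rfl, by simpa using decode3 hU3 hinj _ _ h⟩
      · exact absurd hrestr (hF x y z x' y').1
      · exact absurd hrestr (hF x y z x' y').2

theorem sync_atomic (hU3 : Uniform φ 3) (hinj : ∀ x y : Fin 3, φ x = φ y → x = y)
    (hF : ∀ x y z x' y' : Fin 3,
      ¬ (wordMap φ [x, y] <+: (wordMap φ [z, x', y']).drop 1) ∧
      ¬ (wordMap φ [x, y] <+: (wordMap φ [z, x', y']).drop 2)) :
    Sync φ 3 := by
  refine ⟨by norm_num, hU3, fun U V p hU => ⟨fun h => align3 hU3 hinj hF V U p hU h, ?_⟩⟩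
  rintro ⟨i, rfl, hpre⟩
  rw [← wordMap_drop hU3]
  exact IsPrefixWordMap hpre

end Atomic

theorem sync_sigma : Sync sigma3 3 :=
  sync_atomic (fun b => by fin_cases b <;> rfl) (by decide) (by decide)

theorem sync_tau : Sync tau3 3 :=
  sync_atomic (fun b => by fin_cases b <;> rfl) (by decide) (by decide)

theorem sync_id : Sync (fun b => [b]) 1 := by
  refine ⟨one_pos, fun b => rfl, fun U V p hU => ?_⟩
  rw [wordMap_id, wordMap_id]
  constructor
  · intro h; exact ⟨p, (one_mul p).symm, h⟩
  · rintro ⟨i, rfl, h⟩; simpa using h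

theorem Sync.comp {φ ψ : Fin 3 → List (Fin 3)} {L M : ℕ}
    (hφ : Sync φ L) (hψ : Sync ψ M) : Sync (compM φ ψ) (L * M) := by
  obtain ⟨hL, hLu, hφi⟩ := hφ
  obtain ⟨hM, hMu, hψi⟩ := hψ
  refine ⟨Nat.mul_pos hL hM, fun b => ?_, fun U V p hU => ?_⟩
  · show (wordMap φ (ψ b)).length = L * M
    rw [length_wordMap hLu, hMu b]
  · rw [wordMap_comp, wordMap_comp]
    have hlen : 2 ≤ (wordMap ψ U).length := by
      rw [length_wordMap hMu]
      calc 2 ≤ 1 * 2 := by omega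
      _ ≤ M * U.length := Nat.mul_le_mul hM hU
    rw [hφi _ _ p hlen]
    constructor
    · rintro ⟨q, rfl, hq⟩
      obtain ⟨i, rfl, hi⟩ := (hψi U V q hU).mp hq
      exact ⟨i, (mul_assoc L M i).symm, hi⟩
    · rintro ⟨i, rfl, hi⟩
      exact ⟨M * i, mul_assoc L M i, (hψi U V (M * i) hU).mpr ⟨i, rfl, hi⟩⟩

theorem sync_pow : ∀ k : ℕ, Sync (powM sigma3 k) (3 ^ k)
  | 0 => by rw [pow_zero]; exact sync_id
  | k + 1 => by
    rw [pow_succ']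
    exact Sync.comp sync_sigma (sync_pow k)

theorem sync_rho : ∀ n : ℕ, ∃ L, Sync (rho n) L
  | 0 => ⟨1, sync_id⟩
  | n + 1 => by
    obtain ⟨L, hL⟩ := sync_rho n
    exact ⟨L * (3 ^ (n + 1) * 3), hL.comp ((sync_pow (n + 1)).comp sync_tau)⟩

/-! #### Positions of occurrences of `ca` -/

theorem caPos_sigma : ∀ (V : List (Fin 3)) (q : ℕ),
    [2, 0] <+: (wordMap sigma3 V).drop q → ∃ i, q = 3 * i + 2 ∧ [2, 0] <+: V.drop i := by
  intro V
  induction V with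
  | nil =>
    intro q h
    have h1 := h.length_le
    rw [show (wordMap sigma3 ([] : List (Fin 3))).drop q = []
        from List.drop_nil, List.length_nil] at h1
    simp at h1
  | cons b V ih =>
    intro q h
    have hU3 : Uniform sigma3 3 := fun b => by fin_cases b <;> rfl
    by_cases hq3 : 3 ≤ q
    · rw [show wordMap sigma3 (b :: V) = sigma3 b ++ wordMap sigma3 V from rfl,
        List.drop_append, List.drop_eq_nil_of_le (by rw [hU3 b]; omega),
        List.nil_append, hU3 b] at h
      obtain ⟨i, hi, hpre⟩ := ih (q - 3) h
      exact ⟨i + 1, by omega, by simpa using hpre⟩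
    · interval_cases q
      · exfalso
        have hthis : ([2, 0] : List (Fin 3)) <+: (sigma3 b).drop 0 := by
          refine prefix_restrict h (List.prefix_append _ _) ?_
          rw [hU3 b]; decide
        have hfact : ∀ b : Fin 3, ¬ (([2, 0] : List (Fin 3)) <+: (sigma3 b).drop 0) := by
          decide
        exact hfact b hthis
      · exfalso
        have hthis : ([2, 0] : List (Fin 3)) <+: (sigma3 b).drop 1 := by
          refine prefix_restrict h (List.prefix_append _ _) ?_
          rw [hU3 b]; decide
        have hfact : ∀ b : Fin 3, ¬ (([2, 0] : List (Fin 3)) <+: (sigma3 b).drop 1) := by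
          decide
        exact hfact b hthis
      · rcases V with _ | ⟨c, V'⟩
        · exfalso
          have := h.length_le
          simp [wordMap, hU3 b] at this
        · have hbc : ([2, 0] : List (Fin 3)) <+: (sigma3 b ++ sigma3 c).drop 2 := by
            refine prefix_restrict h ?_ ?_
            · show sigma3 b ++ sigma3 c <+: wordMap sigma3 (b :: c :: V')
              refine ⟨wordMap sigma3 V', ?_⟩
              show (sigma3 b ++ sigma3 c) ++ wordMap sigma3 V'
                  = sigma3 b ++ (sigma3 c ++ wordMap sigma3 V')
              simp
            · rw [List.length_append, hU3 b, hU3 c]; decide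
          have hfact : ∀ b c : Fin 3,
              ([2, 0] : List (Fin 3)) <+: (sigma3 b ++ sigma3 c).drop 2 → b = 2 ∧ c = 0 := by
            decide
          have hres : b = 2 ∧ c = 0 := hfact b c hbc
          obtain ⟨rfl, rfl⟩ := hres
          exact ⟨0, rfl, ⟨V', rfl⟩⟩

theorem caPos_tau : ∀ (V : List (Fin 3)) (q : ℕ),
    [2, 0] <+: (wordMap tau3 V).drop q → q % 3 = 2 := by
  intro V
  induction V with
  | nil =>
    intro q h
    have h1 := h.length_le
    rw [show (wordMap tau3 ([] : List (Fin 3))).drop q = []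
        from List.drop_nil, List.length_nil] at h1
    simp at h1
  | cons b V ih =>
    intro q h
    have hU3 : Uniform tau3 3 := fun b => by fin_cases b <;> rfl
    by_cases hq3 : 3 ≤ q
    · rw [show wordMap tau3 (b :: V) = tau3 b ++ wordMap tau3 V from rfl,
        List.drop_append, List.drop_eq_nil_of_le (by rw [hU3 b]; omega),
        List.nil_append, hU3 b] at h
      have := ih (q - 3) h
      omega
    · interval_cases q
      · exfalso
        have hthis : ([2, 0] : List (Fin 3)) <+: (tau3 b).drop 0 := by
          refine prefix_restrict h (List.prefix_append _ _) ?_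
          rw [hU3 b]; decide
        have hfact : ∀ b : Fin 3, ¬ (([2, 0] : List (Fin 3)) <+: (tau3 b).drop 0) := by
          decide
        exact hfact b hthis
      · exfalso
        have hthis : ([2, 0] : List (Fin 3)) <+: (tau3 b).drop 1 := by
          refine prefix_restrict h (List.prefix_append _ _) ?_
          rw [hU3 b]; decide
        have hfact : ∀ b : Fin 3, ¬ (([2, 0] : List (Fin 3)) <+: (tau3 b).drop 1) := by
          decide
        exact hfact b hthis
      · rfl

theorem caPos_pow : ∀ (k : ℕ) (V : List (Fin 3)) (q : ℕ),
    [2, 0] <+: (wordMap (powM sigma3 k) V).drop q →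
    ∃ i, q + 1 = 3 ^ k * (i + 1) ∧ [2, 0] <+: V.drop i := by
  intro k
  induction k with
  | zero =>
    intro V q h
    rw [show powM sigma3 0 = (fun b => [b]) from rfl, wordMap_id] at h
    exact ⟨q, by simp, h⟩
  | succ k ih =>
    intro V q h
    rw [show powM sigma3 (k + 1) = compM sigma3 (powM sigma3 k) from rfl,
      wordMap_comp] at h
    obtain ⟨j, hj, h2⟩ := caPos_sigma _ q h
    obtain ⟨i, hi, h3⟩ := ih V j h2
    refine ⟨i, ?_, h3⟩
    rw [pow_succ']
    calc q + 1 = 3 * (j + 1) := by omega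
    _ = 3 * (3 ^ k * (i + 1)) := by rw [hi]
    _ = 3 * 3 ^ k * (i + 1) := by ring

/-! #### Sequence glue -/

theorem length_seqTake (x : ℕ → A) (m : ℕ) : (seqTake x m).length = m := by
  simp [seqTake]

theorem getElem_seqTake (x : ℕ → A) (m k : ℕ) (h : k < m) :
    (seqTake x m)[k]'(by simpa [seqTake] using h) = x k := by
  simp [seqTake]

theorem seqTake_drop (x : ℕ → A) (m i : ℕ) :
    (seqTake x m).drop i = seqTake (fun k => x (i + k)) (m - i) := by
  apply List.ext_getElem
  · simp [seqTake]
  · intro k h1 h2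
    simp [seqTake]

theorem prefix_of_occursAt {x : ℕ → A} {u : List A} {i m : ℕ}
    (h : OccursAt x u i) (hm : i + u.length ≤ m) :
    u <+: (seqTake x m).drop i := by
  rw [seqTake_drop]
  have hu : u = seqTake (fun k => x (i + k)) u.length := by
    apply List.ext_getElem
    · simp [length_seqTake]
    · intro k h1 h2
      rw [getElem_seqTake _ _ k (by omega)]
      exact (h ⟨k, h1⟩).symm
  have htk : (seqTake (fun k => x (i + k)) (m - i)).take u.length
      = seqTake (fun k => x (i + k)) u.length := by
    simp only [seqTake, ← List.map_take, List.take_range]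
    rw [Nat.min_eq_left (by omega)]
  conv_lhs => rw [hu, ← htk]
  exact List.take_prefix _ _

theorem occursAt_of_prefix {x : ℕ → A} {u : List A} {i m : ℕ}
    (h : u <+: (seqTake x m).drop i) : OccursAt x u i := by
  have hlen : u.length ≤ m - i := by
    have := h.length_le
    rwa [List.length_drop, length_seqTake] at this
  rw [seqTake_drop] at h
  obtain ⟨t, ht⟩ := h
  intro k
  have hk : (k : ℕ) < m - i := lt_of_lt_of_le k.2 hlen
  have e1 : (u ++ t)[(k : ℕ)]? = some (x (i + (k : ℕ))) := by
    rw [ht, List.getElem?_eq_getElem (by rw [length_seqTake]; exact hk),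
      getElem_seqTake _ _ _ hk]
  have e2 : (u ++ t)[(k : ℕ)]? = some (u.get k) := by
    rw [List.getElem?_append_left k.2, List.getElem?_eq_getElem k.2,
      List.get_eq_getElem]
  rw [e1] at e2
  exact Option.some_inj.mp e2

theorem occursAt_of_prefix' {x : ℕ → A} {u v : List A} {i : ℕ}
    (h : OccursAt x u i) (hv : v <+: u) : OccursAt x v i := by
  obtain ⟨t, rfl⟩ := hv
  intro k
  have hk : (k : ℕ) < (v ++ t).length := by rw [List.length_append]; omega
  have h1 := h ⟨k, hk⟩
  have e2 : (v ++ t).get ⟨(k : ℕ), hk⟩ = v.get k := by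
    have q1 : (v ++ t)[(k : ℕ)]? = v[(k : ℕ)]? := List.getElem?_append_left k.2
    rw [List.getElem?_eq_getElem hk, List.getElem?_eq_getElem k.2] at q1
    rw [List.get_eq_getElem, List.get_eq_getElem]
    exact Option.some_inj.mp q1
  exact h1.trans e2

theorem occursAt_append_right {x : ℕ → A} {u v : List A} {i : ℕ}
    (h : OccursAt x (u ++ v) i) : OccursAt x v (i + u.length) := by
  intro k
  have hk : u.length + (k : ℕ) < (u ++ v).length := by rw [List.length_append]; omega
  have h1 := h ⟨u.length + (k : ℕ), hk⟩
  have e2 : (u ++ v).get ⟨u.length + (k : ℕ), hk⟩ = v.get k := by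
    have q1 : (u ++ v)[u.length + (k : ℕ)]? = v[(k : ℕ)]? := by
      rw [List.getElem?_append_right (Nat.le_add_right _ _), Nat.add_sub_cancel_left]
    rw [List.getElem?_eq_getElem hk, List.getElem?_eq_getElem k.2] at q1
    rw [List.get_eq_getElem, List.get_eq_getElem]
    exact Option.some_inj.mp q1
  have e3 : x (i + u.length + (k : ℕ)) = x (i + (u.length + (k : ℕ))) := by
    rw [Nat.add_assoc]
  exact e3.trans (h1.trans e2)

end Aux

/-- Let `ρ_n = στσ²τ⋯σⁿτ`, `y = lim σ^{n+2}τσ^{n+3}τ⋯σ^{n+l}τ(aaa⋯)`,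
`z = σ^{n+1}τ(y)` and `x = ρ_n(z)`. If `w` is a return word to `ca` in `z`, then
`ρ_n(ca)` occurs exactly twice in `ρ_n(w·ca)` (= `ρ_n(ca w' ca)`), consequently
`ρ_n(w)` is a return word to `ρ_n(ca)` in `x`; moreover `|w| ≥ 3^{n+2}`. -/
theorem return_word_image (n : ℕ) (y z x : ℕ → Fin 3)
    (hy : ConvergesTo (fun l => psi n l 0) 0 y)
    (hz : IsSeqImage (compM (powM sigma3 (n + 1)) tau3) y z)
    (hx : IsSeqImage (rho n) z x)
    (w : List (Fin 3)) (hw : IsReturnWord z [2, 0] w) :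
    OccCountEq (wordMap (rho n) [2, 0]) (wordMap (rho n) (w ++ [2, 0])) 2 ∧
    IsReturnWord x (wordMap (rho n) [2, 0]) (wordMap (rho n) w) ∧
    3 ^ (n + 2) ≤ w.length := by
  obtain ⟨⟨i0, hi0⟩, hpre, hcount⟩ := hw
  obtain ⟨L, hLpos, hLu, hLiff⟩ := sync_rho n
  -- Part 1: the occurrence count
  have part1 : OccCountEq (wordMap (rho n) [2, 0]) (wordMap (rho n) (w ++ [2, 0])) 2 := by
    unfold OccCountEq
    have hset : {p : ℕ | wordMap (rho n) [2, 0] <+: (wordMap (rho n) (w ++ [2, 0])).drop p}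
        = (fun i => L * i) '' {i : ℕ | [2, 0] <+: (w ++ [2, 0]).drop i} := by
      ext p
      simp only [Set.mem_setOf_eq, Set.mem_image]
      rw [hLiff [2, 0] (w ++ [2, 0]) p (by norm_num)]
      constructor
      · rintro ⟨i, rfl, hi⟩; exact ⟨i, hi, rfl⟩
      · rintro ⟨i, hi, rfl⟩; exact ⟨i, rfl, hi⟩
    rw [hset, Set.ncard_image_of_injective _ (mul_right_injective₀ hLpos.ne')]
    exact hcount
  -- Part 3 preliminaries: positions of `ca` in `z`
  have hzpos : ∀ q : ℕ, OccursAt z [2, 0] q → (3 : ℕ) ^ (n + 2) ∣ (q + 1) := by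
    intro q hq
    have hsy := (sync_pow (n + 1)).comp sync_tau
    obtain ⟨hMpos, hMu, _⟩ := hsy
    set m := q + 2 with hm
    set W := wordMap (compM (powM sigma3 (n + 1)) tau3) (seqTake y m) with hW
    have hlen : W.length = 3 ^ (n + 1) * 3 * m := by
      rw [hW, length_wordMap hMu, length_seqTake]
    have hbig : q + 2 ≤ W.length := by
      rw [hlen]
      calc q + 2 = 1 * m := by omega
      _ ≤ 3 ^ (n + 1) * 3 * m := Nat.mul_le_mul_right m hMpos
    have hp : [2, 0] <+: (seqTake z W.length).drop q :=
      prefix_of_occursAt hq (by simpa using hbig)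
    have hzW : seqTake z W.length = W := by rw [hW]; exact hz m
    rw [hzW, hW, wordMap_comp] at hp
    obtain ⟨j, hj1, hj2⟩ := caPos_pow (n + 1) _ q hp
    have hj3 := caPos_tau _ j hj2
    obtain ⟨t, ht⟩ : ∃ t, j = 3 * t + 2 := ⟨j / 3, by omega⟩
    refine ⟨t + 1, ?_⟩
    rw [hj1, show j + 1 = 3 * (t + 1) by omega, pow_succ]
    ring
  -- `w` is nonempty
  have hw0 : w ≠ [] := by
    intro hnil
    subst hnil
    have hsingle : {i : ℕ | [2, 0] <+: (([] : List (Fin 3)) ++ [2, 0]).drop i} = {0} := by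
      ext j
      simp only [Set.mem_setOf_eq, Set.mem_singleton_iff, List.nil_append]
      constructor
      · intro hj
        by_contra hj0
        have h1 := hj.length_le
        rw [List.length_drop] at h1
        simp at h1
        omega
      · rintro rfl
        exact List.prefix_refl _
    unfold OccCountEq at hcount
    rw [hsingle] at hcount
    simp at hcount
  -- the two occurrences of `ca`
  have hca1 : OccursAt z [2, 0] i0 := occursAt_of_prefix' hi0 hpre
  have hca2 : OccursAt z [2, 0] (i0 + w.length) := occursAt_append_right hi0
  have d1 := hzpos i0 hca1
  have d2 := hzpos (i0 + w.length) hca2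
  have hdvd : (3 : ℕ) ^ (n + 2) ∣ w.length := by
    have := Nat.dvd_sub d2 d1
    rwa [show i0 + w.length + 1 - (i0 + 1) = w.length by omega] at this
  have part3 : 3 ^ (n + 2) ≤ w.length :=
    Nat.le_of_dvd (List.length_pos_iff.mpr hw0) hdvd
  -- Part 2: the occurrence of the image in `x`
  have hoccx : Occurs x (wordMap (rho n) w ++ wordMap (rho n) [2, 0]) := by
    rw [← wordMap_append]
    set m := i0 + (w ++ [2, 0]).length with hm
    have hzm : (w ++ [2, 0]) <+: (seqTake z m).drop i0 :=
      prefix_of_occursAt hi0 (le_of_eq hm.symm)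
    obtain ⟨r, hr⟩ := hzm
    obtain ⟨P, hsplit⟩ : ∃ P, seqTake z m = P ++ ((w ++ [2, 0]) ++ r) :=
      ⟨(seqTake z m).take i0,
        (List.take_append_drop i0 (seqTake z m)).symm.trans (by rw [← hr])⟩
    refine ⟨(wordMap (rho n) P).length,
      occursAt_of_prefix (m := (wordMap (rho n) (seqTake z m)).length) ?_⟩
    rw [hx m, hsplit, wordMap_append (rho n) P (w ++ [2, 0] ++ r), List.drop_left]
    exact IsPrefixWordMap ⟨r, by simp⟩
  have hprex : wordMap (rho n) [2, 0] <+: wordMap (rho n) w ++ wordMap (rho n) [2, 0] := by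
    obtain ⟨t, ht⟩ := hpre
    rw [← wordMap_append, ← ht, wordMap_append]
    exact List.prefix_append _ _
  have hcountx : OccCountEq (wordMap (rho n) [2, 0])
      (wordMap (rho n) w ++ wordMap (rho n) [2, 0]) 2 := by
    rw [← wordMap_append]
    exact part1
  exact ⟨part1, ⟨hoccx, hprex, hcountx⟩, part3⟩

end DurandLR
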